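/- arXiv:math/0408061 — 2 statements merged into one kernel-verified Lean document; each statement's English description precedes it below -/
import Mathlib

section
/- With d_n = −tⁿD as above and bracket ⟨d_n, d_m⟩_σ = ({n}_q − {m}_q) d_{n+m}, the σ-deformed Jacobi identity holds: (qⁿ+1)⟨d_n, ⟨d_l, d_m⟩_σ⟩_σ + (q^l+1)⟨d_l, ⟨d_m, d_n⟩_σ⟩_σ + (q^m+1)⟨d_m, ⟨d_n, d_l⟩_σ⟩_σ = 0 for all n, m, l ∈ ℤ. -/
noncomputable section

variable (k : Type*) [Field k]

/-- The q-integer `{n}_q = (qⁿ − 1)/(q − 1)` for `n : ℤ`. -/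
def qint (q : k) (n : ℤ) : k := (q ^ n - 1) / (q - 1)

/-- The basis vector `d_n` of the free `k`-module `⊕_{n ∈ ℤ} k·d_n`. -/
def dgen (n : ℤ) : ℤ →₀ k := Finsupp.single n 1

/-- On the free `k`-module with basis `{d_n : n ∈ ℤ}` and bilinear bracket
determined by `⟨d_n, d_m⟩ = ({n}_q − {m}_q) d_{n+m}`, the σ-deformed Jacobi
identity `(qⁿ+1)⟨d_n,⟨d_l,d_m⟩⟩ + (q^l+1)⟨d_l,⟨d_m,d_n⟩⟩ +
(q^m+1)⟨d_m,⟨d_n,d_l⟩⟩ = 0` holds. -/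
theorem stmt9 [CharZero k] (q : k) (hq0 : q ≠ 0) (hq1 : q ≠ 1)
    (br : (ℤ →₀ k) →ₗ[k] (ℤ →₀ k) →ₗ[k] (ℤ →₀ k))
    (hbr : ∀ n m : ℤ, br (dgen k n) (dgen k m) =
      (qint k q n - qint k q m) • dgen k (n + m)) :
    ∀ n m l : ℤ,
      (q ^ n + 1) • br (dgen k n) (br (dgen k l) (dgen k m)) +
      (q ^ l + 1) • br (dgen k l) (br (dgen k m) (dgen k n)) +
      (q ^ m + 1) • br (dgen k m) (br (dgen k n) (dgen k l)) = 0 := by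
  intro n m l
  have h1 : l + (m + n) = n + (l + m) := by ring
  have h2 : m + (n + l) = n + (l + m) := by ring
  rw [hbr, hbr, hbr, map_smul, map_smul, map_smul, hbr, hbr, hbr, h1, h2,
    smul_smul, smul_smul, smul_smul, smul_smul, smul_smul, smul_smul,
    ← add_smul, ← add_smul]
  have hz : (q ^ n + 1) * (qint k q l - qint k q m) * (qint k q n - qint k q (l + m)) +
      (q ^ l + 1) * (qint k q m - qint k q n) * (qint k q l - qint k q (m + n)) +
      (q ^ m + 1) * (qint k q n - qint k q l) * (qint k q m - qint k q (n + l)) = 0 := by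
    have hq : q - 1 ≠ 0 := sub_ne_zero.mpr hq1
    simp only [qint]
    rw [zpow_add₀ hq0, zpow_add₀ hq0, zpow_add₀ hq0]
    field_simp
    ring
  rw [hz, zero_smul]

end
end

section
/- The q-deformed Witt algebra with basis {d_n : n ∈ ℤ} and bracket ⟨d_n, d_m⟩ = ({n}_q − {m}_q) d_{n+m} is a hom-Lie algebra with twisting map α(d_n) = qⁿ d_n: the bracket is skew-symmetric and satisfies the cyclic sum over (x,y,z) of ⟨(id + α)(x), ⟨y,z⟩⟩ = 0. -/
/-!
On the basis `d_n` everything reduces to an identity between q-integers. Writing `t = q - 1`,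
one has `qⁿ = 1 + t{n}_q` and `{n + m}_q = {n}_q + qⁿ{m}_q`, so the coefficient of `d_{n+m+l}`
in the cyclic sum becomes a polynomial in `t, {n}_q, {m}_q, {l}_q` that vanishes identically.
Since the cyclic sum is invariant under rotating `(x, y, z)` and linear in `x`, vanishing on
basis triples propagates to all triples one argument at a time.
-/

noncomputable section

variable (k : Type*) [Field k]

section TwistedJacobiator

variable {R M ι : Type*} [CommRing R] [AddCommGroup M] [Module R M]

def twistedJacobiator (br : M →ₗ[R] M →ₗ[R] M) (α : M →ₗ[R] M) (x y z : M) : M :=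
  br (x + α x) (br y z) + br (y + α y) (br z x) + br (z + α z) (br x y)

variable (br : M →ₗ[R] M →ₗ[R] M) (α : M →ₗ[R] M)

theorem twistedJacobiator_rotate (x y z : M) :
    twistedJacobiator br α x y z = twistedJacobiator br α y z x := by
  unfold twistedJacobiator
  abel

theorem twistedJacobiator_eq_apply (x y z : M) :
    twistedJacobiator br α x y z =
      (br.flip (br y z) ∘ₗ (LinearMap.id + α) + br (y + α y) ∘ₗ br z +
        br (z + α z) ∘ₗ br.flip y : M →ₗ[R] M) x :=
  rfl

variable (b : Module.Basis ι R M)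

theorem twistedJacobiator_eq_zero_of_basis_left {y z : M}
    (h : ∀ i, twistedJacobiator br α (b i) y z = 0) (x : M) :
    twistedJacobiator br α x y z = 0 := by
  rw [twistedJacobiator_eq_apply]
  exact LinearMap.congr_fun (b.ext (f₂ := 0) h) x

theorem twistedJacobiator_eq_zero_of_basis
    (h : ∀ i j l, twistedJacobiator br α (b i) (b j) (b l) = 0) (x y z : M) :
    twistedJacobiator br α x y z = 0 := by
  have h₁ : ∀ x j l, twistedJacobiator br α x (b j) (b l) = 0 := fun x j l =>
    twistedJacobiator_eq_zero_of_basis_left br α b (fun i => h i j l) x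
  have h₂ : ∀ x y l, twistedJacobiator br α x y (b l) = 0 := by
    intro x y l
    rw [twistedJacobiator_rotate]
    refine twistedJacobiator_eq_zero_of_basis_left br α b (fun j => ?_) y
    rw [← twistedJacobiator_rotate, h₁]
  rw [← twistedJacobiator_rotate]
  refine twistedJacobiator_eq_zero_of_basis_left br α b (fun l => ?_) z
  rw [twistedJacobiator_rotate, h₂]

theorem eq_neg_flip_of_basis (h : ∀ i j, br (b i) (b j) = -br (b j) (b i))
    (x y : M) : br x y = -br y x := by
  have : br = -br.flip := b.ext fun i => b.ext fun j => h i j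
  exact LinearMap.congr_fun₂ this x y

end TwistedJacobiator

section QInt

variable {k}

theorem zpow_eq_one_add_mul_qint {q : k} (hq1 : q ≠ 1) (n : ℤ) :
    q ^ n = 1 + (q - 1) * qint k q n := by
  rw [qint, mul_div_cancel₀ _ (sub_ne_zero.mpr hq1)]
  ring

theorem qint_add {q : k} (hq0 : q ≠ 0) (hq1 : q ≠ 1) (n m : ℤ) :
    qint k q (n + m) = qint k q n + q ^ n * qint k q m := by
  have : q - 1 ≠ 0 := sub_ne_zero.mpr hq1
  simp only [qint, zpow_add₀ hq0]
  field_simp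
  ring

theorem qint_cyclic {q : k} (hq0 : q ≠ 0) (hq1 : q ≠ 1) (n m l : ℤ) :
    (qint k q m - qint k q l) * ((1 + q ^ n) * (qint k q n - qint k q (m + l))) +
      (qint k q l - qint k q n) * ((1 + q ^ m) * (qint k q m - qint k q (l + n))) +
      (qint k q n - qint k q m) * ((1 + q ^ l) * (qint k q l - qint k q (n + m))) = 0 := by
  simp only [qint_add hq0 hq1, zpow_eq_one_add_mul_qint hq1]
  ring

end QInt

theorem stmt10 (q : k) (hq0 : q ≠ 0) (hq1 : q ≠ 1)
    (br : (ℤ →₀ k) →ₗ[k] (ℤ →₀ k) →ₗ[k] (ℤ →₀ k))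
    (hbr : ∀ n m : ℤ, br (dgen k n) (dgen k m) =
      (qint k q n - qint k q m) • dgen k (n + m))
    (α : (ℤ →₀ k) →ₗ[k] (ℤ →₀ k))
    (hα : ∀ n : ℤ, α (dgen k n) = (q ^ n) • dgen k n) :
    (∀ x y : ℤ →₀ k, br x y = -br y x) ∧
    (∀ x y z : ℤ →₀ k,
      br (x + α x) (br y z) + br (y + α y) (br z x) + br (z + α z) (br x y) = 0) := by
  have twist : ∀ n, dgen k n + α (dgen k n) = (1 + q ^ n) • dgen k n := fun n => by
    rw [hα, add_smul, one_smul]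
  refine ⟨eq_neg_flip_of_basis br Finsupp.basisSingleOne fun n m => ?_,
    twistedJacobiator_eq_zero_of_basis br α Finsupp.basisSingleOne fun n m l => ?_⟩
  · change br (dgen k n) (dgen k m) = -br (dgen k m) (dgen k n)
    rw [hbr, hbr, add_comm m, ← neg_smul, neg_sub]
  · change twistedJacobiator br α (dgen k n) (dgen k m) (dgen k l) = 0
    simp only [twistedJacobiator, twist, hbr, map_smul, LinearMap.smul_apply, smul_smul]
    rw [show m + (l + n) = n + (m + l) by ring, show l + (n + m) = n + (m + l) by ring,
      ← add_smul, ← add_smul, qint_cyclic hq0 hq1, zero_smul]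

end
end
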